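/- In ℚ⟦X⟧ one has the identity Σ_{n=0}^∞ σ_ed meex(n)·X^n = 2 · ( (−X²; X²)_∞ / (X; X²)_∞ ) · Σ_{n=0}^∞ X^{n(n+1)} / (−X²; X²)_n. (The inner sum equals Ramanujan's σ(X²), where σ(q) = Σ_{n≥0} q^{n(n+1)/2}/(−q;q)_n.) -/

import Mathlib

open PowerSeries Finset
open scoped Classical

noncomputable section

instance : TopologicalSpace (PowerSeries ℚ) :=
  @Pi.topologicalSpace (Unit →₀ ℕ) (fun _ => ℚ) (fun _ => inferInstance)

instance : T2Space (PowerSeries ℚ) :=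
  @Pi.t2Space (Unit →₀ ℕ) (fun _ => ℚ) _ (fun _ => inferInstance)

/-- `(ε X^b ; X^d)_∞ = ∏_{k=0}^∞ (1 - ε X^{b+dk})`, a coefficientwise-convergent
infinite product in `ℚ⟦X⟧` with the product topology. -/
def pochInf (ε : ℚ) (b d : ℕ) : PowerSeries ℚ :=
  ∏' k : ℕ, (1 - PowerSeries.C ε * PowerSeries.X ^ (b + d * k))

/-- `(ε X^b ; X^d)_m = ∏_{k=0}^{m-1} (1 - ε X^{b+dk})` -/
def pochFin (ε : ℚ) (b d m : ℕ) : PowerSeries ℚ :=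
  ∏ k ∈ Finset.range m, (1 - PowerSeries.C ε * PowerSeries.X ^ (b + d * k))

/-- the smallest positive integer that is not a part of `l` -/
def pmex {n : ℕ} (l : n.Partition) : ℕ := sInf {k : ℕ | 0 < k ∧ k ∉ l.parts}

/-- the smallest odd positive integer that is not a part of `l` -/
def pmoex {n : ℕ} (l : n.Partition) : ℕ := sInf {k : ℕ | Odd k ∧ k ∉ l.parts}

/-- the smallest even positive integer that is not a part of `l` -/
def pmeex {n : ℕ} (l : n.Partition) : ℕ := sInf {k : ℕ | Even k ∧ 0 < k ∧ k ∉ l.parts}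

/-- every odd part occurs at most once -/
def OddDistinct {n : ℕ} (l : n.Partition) : Prop := ∀ i, Odd i → l.parts.count i ≤ 1

/-- every even part occurs at most once -/
def EvenDistinct {n : ℕ} (l : n.Partition) : Prop := ∀ i, Even i → l.parts.count i ≤ 1

/-- `σ_ed meex(n)`: sum of meex over partitions of `n` with distinct even parts -/
def sigmaEdMeex (n : ℕ) : ℕ :=
  ∑ l ∈ Finset.univ.filter (fun l : n.Partition => EvenDistinct l), pmeex l

lemma ps_apply (f : PowerSeries ℚ) (σ : Unit →₀ ℕ) : f σ = PowerSeries.coeff (σ ()) f := by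
  have : σ = Finsupp.single () (σ ()) := by
    ext; simp
  rw [PowerSeries.coeff, MvPowerSeries.coeff, ← this]
  rfl

lemma hasSum_aux (f : ℕ → PowerSeries ℚ) (h : ∀ n N, PowerSeries.coeff N (f n) ≠ 0 → n ≤ N) :
    HasSum f (PowerSeries.mk fun N => ∑ n ∈ range (N + 1), PowerSeries.coeff N (f n)) := by
  refine Pi.hasSum.mpr ?_
  intro σ
  have h2 : ∀ n ∉ range (σ () + 1), f n σ = 0 := by
    intro n hn
    rw [ps_apply (f n) σ]
    by_contra hc
    exact hn (mem_range.mpr (Nat.lt_succ_of_le (h n _ hc)))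
  have := hasSum_sum_of_ne_finset_zero (L := SummationFilter.unconditional ℕ) h2
  convert this using 1
  rw [ps_apply (PowerSeries.mk fun N => ∑ n ∈ range (N + 1), PowerSeries.coeff N (f n)) σ, PowerSeries.coeff_mk]
  exact Finset.sum_congr rfl fun n _ => (ps_apply _ _).symm

/-- congruence modulo `X^M` -/
def EqMod (F G : PowerSeries ℚ) (M : ℕ) : Prop := (PowerSeries.X : PowerSeries ℚ) ^ M ∣ F - G

lemma EqMod.refl (F : PowerSeries ℚ) (M : ℕ) : EqMod F F M := by simp [EqMod]

lemma EqMod.symm {F G : PowerSeries ℚ} {M : ℕ} (h : EqMod F G M) : EqMod G F M := by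
  have : G - F = -(F - G) := by ring
  rw [EqMod, this]
  exact dvd_neg.mpr h

lemma EqMod.coeff_eq {F G : PowerSeries ℚ} {M : ℕ} (h : EqMod F G M) {N : ℕ} (hN : N < M) :
    PowerSeries.coeff N F = PowerSeries.coeff N G := by
  have := (PowerSeries.X_pow_dvd_iff.mp h) N hN
  rw [map_sub] at this
  linarith

lemma EqMod.trans {F G H : PowerSeries ℚ} {M : ℕ} (h1 : EqMod F G M) (h2 : EqMod G H M) :
    EqMod F H M := by
  rw [EqMod, show F - H = (F - G) + (G - H) by ring]
  exact dvd_add h1 h2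

lemma EqMod.mul {F F' G G' : PowerSeries ℚ} {M : ℕ} (h1 : EqMod F F' M) (h2 : EqMod G G' M) :
    EqMod (F * G) (F' * G') M := by
  rw [EqMod, show F * G - F' * G' = F * (G - G') + (F - F') * G' by ring]
  exact dvd_add (Dvd.dvd.mul_left h2 F) (Dvd.dvd.mul_right h1 G')

lemma EqMod.prod_one {s : Finset ℕ} {g : ℕ → PowerSeries ℚ} {M : ℕ}
    (h : ∀ k ∈ s, EqMod (g k) 1 M) : EqMod (∏ k ∈ s, g k) 1 M := by
  induction s using Finset.induction with
  | empty => simpa using EqMod.refl 1 M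
  | @insert a s hx ih =>
    rw [Finset.prod_insert hx]
    have := (h a (mem_insert_self a s)).mul (ih fun k hk => h k (mem_insert_of_mem hk))
    simpa using this

lemma EqMod.inv {F G : PowerSeries ℚ} {M : ℕ} (h : EqMod F G M)
    (hF : PowerSeries.constantCoeff F ≠ 0) (hG : PowerSeries.constantCoeff G ≠ 0) :
    EqMod F⁻¹ G⁻¹ M := by
  have key : F⁻¹ - G⁻¹ = F⁻¹ * G⁻¹ * (G - F) := by
    rw [mul_sub]
    rw [show F⁻¹ * G⁻¹ * G = F⁻¹ * (G⁻¹ * G) by ring, PowerSeries.inv_mul_cancel _ hG]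
    rw [show F⁻¹ * G⁻¹ * F = (F⁻¹ * F) * G⁻¹ by ring, PowerSeries.inv_mul_cancel _ hF]
    ring
  rw [EqMod, key]
  exact Dvd.dvd.mul_left h.symm _

lemma EqMod_factor (ε : ℚ) (p M : ℕ) (h : M ≤ p) :
    EqMod (1 - PowerSeries.C ε * PowerSeries.X ^ p) 1 M := by
  obtain ⟨q, rfl⟩ : ∃ q, p = M + q := ⟨p - M, by omega⟩
  rw [EqMod, show (1 - PowerSeries.C ε * PowerSeries.X ^ (M + q)) - 1
      = PowerSeries.X ^ M * (-(PowerSeries.C ε) * PowerSeries.X ^ q) by rw [pow_add]; ring]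
  exact Dvd.intro _ rfl

lemma pochFin_congr {ε : ℚ} {b d m m' M : ℕ} (hb : 0 < b) (hd : 0 < d) (hm : M ≤ m + 1) (hmm : m ≤ m') :
    EqMod (pochFin ε b d m') (pochFin ε b d m) M := by
  rw [pochFin, pochFin, ← Finset.prod_range_mul_prod_Ico _ hmm]
  have h1 : EqMod (∏ k ∈ Finset.Ico m m', (1 - PowerSeries.C ε * PowerSeries.X ^ (b + d * k))) 1 M := by
    apply EqMod.prod_one
    intro k hk
    apply EqMod_factor
    have h1 := (Finset.mem_Ico.mp hk).1
    have h2 : k ≤ d * k := Nat.le_mul_of_pos_left k hd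
    omega
  have := (EqMod.refl (∏ k ∈ Finset.range m, (1 - PowerSeries.C ε * PowerSeries.X ^ (b + d * k))) M).mul h1
  simpa using this

lemma hasProd_poch (ε : ℚ) (b d : ℕ) (hb : 0 < b) (hd : 0 < d) :
    HasProd (fun k => 1 - PowerSeries.C ε * PowerSeries.X ^ (b + d * k))
      (PowerSeries.mk fun N => PowerSeries.coeff N (pochFin ε b d (N + 1))) := by
  rw [HasProd, show (nhds _) = _ from rfl]
  refine tendsto_pi_nhds.mpr ?_
  intro σ
  apply Filter.Tendsto.congr' ?_ tendsto_const_nhds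
  filter_upwards [Filter.eventually_ge_atTop (range (σ () + 1))] with s hs
  rw [ps_apply (PowerSeries.mk fun N => PowerSeries.coeff N (pochFin ε b d (N + 1))) σ,
    PowerSeries.coeff_mk,
    ps_apply (∏ k ∈ s, (1 - PowerSeries.C ε * PowerSeries.X ^ (b + d * k))) σ]
  set N := σ ()
  rw [← Finset.prod_sdiff hs]
  have h1 : EqMod (∏ k ∈ s \ range (N + 1), (1 - PowerSeries.C ε * PowerSeries.X ^ (b + d * k))) 1 (N + 1) := by
    apply EqMod.prod_one
    intro k hk
    apply EqMod_factor
    have h1 := (Finset.mem_sdiff.mp hk).2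
    simp only [Finset.mem_range, not_lt] at h1
    have h2 : k ≤ d * k := Nat.le_mul_of_pos_left k hd
    omega
  have h2 := h1.mul (EqMod.refl (∏ k ∈ range (N + 1), (1 - PowerSeries.C ε * PowerSeries.X ^ (b + d * k))) (N + 1))
  have := h2.coeff_eq (N := N) (by omega)
  rw [this]
  simp [pochFin]

lemma pochInf_coeff (ε : ℚ) (b d : ℕ) (hb : 0 < b) (hd : 0 < d) (N : ℕ) :
    PowerSeries.coeff N (pochInf ε b d) = PowerSeries.coeff N (pochFin ε b d (N + 1)) := by
  rw [pochInf, (hasProd_poch ε b d hb hd).tprod_eq, PowerSeries.coeff_mk]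

lemma EqMod_pochInf {ε : ℚ} {b d m M : ℕ} (hb : 0 < b) (hd : 0 < d) (hm : M ≤ m) :
    EqMod (pochInf ε b d) (pochFin ε b d m) M := by
  rw [EqMod]
  rw [PowerSeries.X_pow_dvd_iff]
  intro i hi
  have h := (pochFin_congr (ε := ε) (b := b) (d := d) (M := i + 1) (m := i + 1) (m' := m)
      hb hd (by omega) (by omega)).coeff_eq (N := i) (by omega)
  rw [map_sub, pochInf_coeff ε b d hb hd i, h, sub_self]

lemma pochFin_mul (ε : ℚ) (b d m m' : ℕ) :
    pochFin ε b d m * pochFin ε (b + d * m) d m' = pochFin ε b d (m + m') := by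
  rw [pochFin, pochFin, pochFin, Finset.prod_range_add]
  congr 1
  apply Finset.prod_congr rfl
  intro k _
  congr 2
  ring

lemma pochInf_split (ε : ℚ) (b d m : ℕ) (hb : 0 < b) (hd : 0 < d) :
    pochInf ε b d = pochFin ε b d m * pochInf ε (b + d * m) d := by
  ext N
  have E1 : EqMod (pochInf ε b d) (pochFin ε b d (m + (N + 1))) (N + 1) :=
    EqMod_pochInf hb hd (by omega)
  have E2 : EqMod (pochInf ε (b + d * m) d) (pochFin ε (b + d * m) d (N + 1)) (N + 1) :=
    EqMod_pochInf (by omega) hd le_rfl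
  have E3 := (EqMod.refl (pochFin ε b d m) (N + 1)).mul E2
  rw [pochFin_mul] at E3
  rw [E1.coeff_eq (by omega), (E3.symm).coeff_eq (N := N) (by omega)]

lemma constCoeff_pochFin (ε : ℚ) {b : ℕ} (d m : ℕ) (hb : 0 < b) :
    PowerSeries.constantCoeff (pochFin ε b d m) = 1 := by
  rw [pochFin, map_prod]
  apply Finset.prod_eq_one
  intro k _
  simp [zero_pow (by omega : b + d * k ≠ 0)]

lemma constCoeff_pochInf (ε : ℚ) {b : ℕ} (d : ℕ) (hb : 0 < b) (hd : 0 < d) :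
    PowerSeries.constantCoeff (pochInf ε b d) = 1 := by
  rw [← PowerSeries.coeff_zero_eq_constantCoeff, pochInf_coeff ε b d hb hd 0,
    PowerSeries.coeff_zero_eq_constantCoeff]
  exact constCoeff_pochFin ε d 1 hb

variable {α : Type*}

/-- A convenience constructor for the power series whose coefficients indicate a subset. -/
def indicatorSeries (α : Type*) [Semiring α] (s : Set ℕ) : PowerSeries α :=
  PowerSeries.mk fun n => if n ∈ s then 1 else 0

theorem coeff_indicator (s : Set ℕ) [Semiring α] (n : ℕ) :
    coeff n (indicatorSeries α s) = if n ∈ s then 1 else 0 :=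
  coeff_mk _ _

theorem coeff_indicator_pos (s : Set ℕ) [Semiring α] (n : ℕ) (h : n ∈ s) :
    coeff n (indicatorSeries α s) = 1 := by rw [coeff_indicator, if_pos h]

theorem coeff_indicator_neg (s : Set ℕ) [Semiring α] (n : ℕ) (h : n ∉ s) :
    coeff n (indicatorSeries α s) = 0 := by rw [coeff_indicator, if_neg h]

theorem constantCoeff_indicator (s : Set ℕ) [Semiring α] :
    constantCoeff (indicatorSeries α s) = if 0 ∈ s then 1 else 0 :=
  rfl

theorem two_series (i : ℕ) [Semiring α] :
    1 + (X : PowerSeries α) ^ i.succ = indicatorSeries α {0, i.succ} := by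
  ext n
  simp only [coeff_indicator, coeff_one, coeff_X_pow, Set.mem_insert_iff, Set.mem_singleton_iff,
    map_add]
  cases' n with d
  · simp [(Nat.succ_ne_zero i).symm]
  · simp [Nat.succ_ne_zero d]

theorem num_series' [Field α] (i : ℕ) :
    (1 - (X : PowerSeries α) ^ (i + 1))⁻¹ = indicatorSeries α {k | i + 1 ∣ k} := by
  rw [PowerSeries.inv_eq_iff_mul_eq_one]
  · ext n
    cases n with
    | zero => simp [mul_sub, zero_pow, constantCoeff_indicator]
    | succ n =>
      simp only [coeff_one, if_false, mul_sub, mul_one, coeff_indicator,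
        LinearMap.map_sub, reduceCtorEq]
      simp_rw [coeff_mul, coeff_X_pow, coeff_indicator, @boole_mul _ _ _ _]
      rw [@sum_ite _ _ _ _ _ (fun _ => Classical.propDecidable _), sum_ite]
      simp_rw [@filter_filter _ _ _ _ _, sum_const_zero, add_zero, sum_const, nsmul_eq_mul, mul_one,
        sub_eq_iff_eq_add, zero_add]
      symm
      split_ifs with h
      · suffices #{a ∈ antidiagonal (n + 1) | i + 1 ∣ a.fst ∧ a.snd = i + 1} = 1 by
          simp only [Set.mem_setOf_eq]; convert congr_arg ((↑) : ℕ → α) this; norm_cast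
        rw [card_eq_one]
        cases' h with p hp
        refine ⟨((i + 1) * (p - 1), i + 1), ?_⟩
        ext ⟨a₁, a₂⟩
        simp only [mem_filter, Prod.mk_inj, Finset.HasAntidiagonal.mem_antidiagonal, mem_singleton]
        constructor
        · rintro ⟨a_left, ⟨a, rfl⟩, rfl⟩
          refine ⟨?_, rfl⟩
          rw [Nat.mul_sub_left_distrib, ← hp, ← a_left, mul_one, Nat.add_sub_cancel]
        · rintro ⟨rfl, rfl⟩
          match p with
          | 0 => rw [mul_zero] at hp; cases hp
          | p + 1 => rw [hp]; simp [mul_add]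
      · suffices #{a ∈ antidiagonal (n + 1) | i + 1 ∣ a.fst ∧ a.snd = i + 1} = 0 by
          simp only [Set.mem_setOf_eq]; convert congr_arg ((↑) : ℕ → α) this; norm_cast
        rw [card_eq_zero]
        apply eq_empty_of_forall_notMem
        simp only [Prod.forall, mem_filter, not_and, Finset.HasAntidiagonal.mem_antidiagonal]
        rintro _ h₁ h₂ ⟨a, rfl⟩ rfl
        apply h
        simp [← h₂]
  · simp [zero_pow]


-- The main workhorse of the partition theorem proof.
theorem partialGF_prop (α : Type*) [CommSemiring α] (n : ℕ) (s : Finset ℕ) (hs : ∀ i ∈ s, 0 < i)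
    (c : ℕ → Set ℕ) (hc : ∀ i, i ∉ s → 0 ∈ c i) :
    #{p : n.Partition | (∀ j, p.parts.count j ∈ c j) ∧ ∀ j ∈ p.parts, j ∈ s} =
      coeff n (∏ i ∈ s, indicatorSeries α ((· * i) '' c i)) := by
  simp_rw [coeff_prod, coeff_indicator, prod_boole, sum_boole]
  apply congr_arg
  simp only [mem_univ, forall_true_left, not_and, not_forall, exists_prop,
    Set.mem_image, not_exists]
  set φ : (a : Nat.Partition n) →
    a ∈ filter (fun p ↦ (∀ (j : ℕ), Multiset.count j p.parts ∈ c j) ∧ ∀ j ∈ p.parts, j ∈ s) univ →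
    ℕ →₀ ℕ := fun p _ => {
      toFun := fun i => Multiset.count i p.parts • i
      support := Finset.filter (fun i => i ≠ 0) p.parts.toFinset
      mem_support_toFun := fun a => by
        simp only [smul_eq_mul, ne_eq, mul_eq_zero, Multiset.count_eq_zero]
        rw [not_or, not_not]
        simp only [Multiset.mem_toFinset, not_not, mem_filter] }
  refine Finset.card_bij φ ?_ ?_ ?_
  · intro a ha
    simp only [φ, not_forall, not_exists, not_and, exists_prop, mem_filter]
    rw [mem_finsuppAntidiag]
    dsimp only [ne_eq, smul_eq_mul, id_eq, eq_mpr_eq_cast, le_eq_subset, Finsupp.coe_mk]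
    simp only [mem_univ, forall_true_left, not_and, not_forall, exists_prop,
      mem_filter, true_and] at ha
    refine ⟨⟨?_, fun i ↦ ?_⟩, fun i _ ↦ ⟨a.parts.count i, ha.1 i, rfl⟩⟩
    · conv_rhs => simp [← a.parts_sum]
      rw [sum_multiset_count_of_subset _ s]
      · simp only [smul_eq_mul]
      · intro i
        simp only [Multiset.mem_toFinset, not_not, mem_filter]
        apply ha.2
    · simp only [ne_eq, Multiset.mem_toFinset, not_not, mem_filter, and_imp]
      exact fun hi _ ↦ ha.2 i hi
  · intro p₁ hp₁ p₂ hp₂ h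
    apply Nat.Partition.ext
    simp only [true_and, mem_univ, mem_filter] at hp₁ hp₂
    ext i
    simp only [φ, ne_eq, Multiset.mem_toFinset, not_not, smul_eq_mul, Finsupp.mk.injEq] at h
    by_cases hi : i = 0
    · rw [hi]
      rw [Multiset.count_eq_zero_of_notMem]
      · rw [Multiset.count_eq_zero_of_notMem]
        intro a; exact Nat.lt_irrefl 0 (hs 0 (hp₂.2 0 a))
      intro a; exact Nat.lt_irrefl 0 (hs 0 (hp₁.2 0 a))
    · rw [← mul_left_inj' hi]
      rw [funext_iff] at h
      exact h.2 i
  · simp only [φ, mem_filter, mem_finsuppAntidiag, mem_univ, exists_prop, true_and, and_assoc]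
    rintro f ⟨hf, hf₃, hf₄⟩
    have hf' : f ∈ finsuppAntidiag s n := mem_finsuppAntidiag.mpr ⟨hf, hf₃⟩
    simp only [mem_finsuppAntidiag] at hf'
    refine ⟨⟨∑ i ∈ s, Multiset.replicate (f i / i) i, ?_, ?_⟩, ?_, ?_, ?_⟩
    · intro i hi
      simp only [exists_prop, Multiset.mem_sum, mem_map, Function.Embedding.coeFn_mk] at hi
      rcases hi with ⟨t, ht, z⟩
      apply hs
      rwa [Multiset.eq_of_mem_replicate z]
    · simp_rw [Multiset.sum_sum, Multiset.sum_replicate, Nat.nsmul_eq_mul]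
      rw [← hf'.1]
      refine sum_congr rfl fun i hi => Nat.div_mul_cancel ?_
      rcases hf₄ i hi with ⟨w, _, hw₂⟩
      rw [← hw₂]
      exact dvd_mul_left _ _
    · intro i
      simp_rw [Multiset.count_sum', Multiset.count_replicate, sum_ite_eq']
      split_ifs with h
      · rcases hf₄ i h with ⟨w, hw₁, hw₂⟩
        rwa [← hw₂, Nat.mul_div_cancel _ (hs i h)]
      · exact hc _ h
    · intro i hi
      rw [Multiset.mem_sum] at hi
      rcases hi with ⟨j, hj₁, hj₂⟩
      rwa [Multiset.eq_of_mem_replicate hj₂]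
    · ext i
      simp_rw [Multiset.count_sum', Multiset.count_replicate, sum_ite_eq']
      simp only [ne_eq, Multiset.mem_toFinset, not_not, smul_eq_mul, ite_mul,
        zero_mul, Finsupp.coe_mk]
      split_ifs with h
      · apply Nat.div_mul_cancel
        rcases hf₄ i h with ⟨w, _, hw₂⟩
        apply Dvd.intro_left _ hw₂
      · apply symm
        rw [← Finsupp.notMem_support_iff]
        exact notMem_mono hf'.2 h


def containsUpTo (j : ℕ) {n : ℕ} (l : n.Partition) : Prop := ∀ i ∈ Finset.Icc 1 j, 2 * i ∈ l.parts
def avoidsUpTo (j : ℕ) {n : ℕ} (l : n.Partition) : Prop := ∀ i ∈ Finset.Icc 1 j, 2 * i ∉ l.parts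

lemma part_le {n : ℕ} (l : n.Partition) {i : ℕ} (h : i ∈ l.parts) : i ≤ n := by
  have := Multiset.single_le_sum (fun x _ => Nat.zero_le x) i h
  rwa [l.parts_sum] at this

lemma pmeex_mem {n : ℕ} (l : n.Partition) :
    Even (pmeex l) ∧ 0 < pmeex l ∧ pmeex l ∉ l.parts := by
  have hmem : (2 * n + 2) ∈ {k : ℕ | Even k ∧ 0 < k ∧ k ∉ l.parts} :=
    ⟨⟨n + 1, by ring⟩, by omega, fun h => by have := part_le l h; omega⟩
  exact Nat.sInf_mem ⟨_, hmem⟩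

lemma pmeex_le {n : ℕ} (l : n.Partition) {k : ℕ} (hk : Even k) (h0 : 0 < k)
    (h : k ∉ l.parts) : pmeex l ≤ k := Nat.sInf_le ⟨hk, h0, h⟩

lemma mem_of_lt_pmeex {n : ℕ} (l : n.Partition) {k : ℕ} (hk : Even k) (h0 : 0 < k)
    (h : k < pmeex l) : k ∈ l.parts := by
  by_contra hc
  exact absurd (pmeex_le l hk h0 hc) (by omega)

lemma pmeex_le_bound {n : ℕ} (l : n.Partition) : pmeex l ≤ 2 * n + 2 :=
  pmeex_le l ⟨n + 1, by ring⟩ (by omega) (fun h => by have := part_le l h; omega)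

lemma pmeex_eq (N : ℕ) (l : N.Partition) :
    pmeex l = ∑ j ∈ range (N + 1), (if containsUpTo j l then 2 else 0) := by
  obtain ⟨hev, hpos, hnm⟩ := pmeex_mem l
  have hbd := pmeex_le_bound l
  have hev2 := Nat.even_iff.mp hev
  have key : (range (N + 1)).filter (fun j => containsUpTo j l) = range (pmeex l / 2) := by
    ext j
    simp only [mem_filter, mem_range]
    constructor
    · rintro ⟨hj, hcond⟩
      by_contra hc
      have h2j : pmeex l ≤ 2 * j := by omega
      have : 2 * (pmeex l / 2) ∈ l.parts := by
        apply hcond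
        rw [Finset.mem_Icc]
        omega
      rw [show 2 * (pmeex l / 2) = pmeex l by omega] at this
      exact hnm this
    · intro hj
      refine ⟨by omega, fun i hi => ?_⟩
      rw [Finset.mem_Icc] at hi
      exact mem_of_lt_pmeex l ⟨i, by ring⟩ (by omega) (by omega)
  rw [← Finset.sum_filter, key, Finset.sum_const, smul_eq_mul, Finset.card_range]
  omega

def Dmul (j : ℕ) : Multiset ℕ := (Finset.Icc 1 j).val.map (fun i => 2 * i)

lemma mem_Dmul {j k : ℕ} : k ∈ Dmul j ↔ ∃ i, 1 ≤ i ∧ i ≤ j ∧ k = 2 * i := by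
  simp only [Dmul, Multiset.mem_map, Finset.mem_val, Finset.mem_Icc]
  constructor
  · rintro ⟨i, ⟨h1, h2⟩, rfl⟩; exact ⟨i, h1, h2, rfl⟩
  · rintro ⟨i, h1, h2, rfl⟩; exact ⟨i, ⟨h1, h2⟩, rfl⟩

lemma Dmul_nodup (j : ℕ) : (Dmul j).Nodup :=
  Multiset.Nodup.map (fun a b hab => by omega) (Finset.Icc 1 j).nodup

lemma Dmul_count {j k : ℕ} : (Dmul j).count k = if k ∈ Dmul j then 1 else 0 := by
  split_ifs with h
  · exact Multiset.count_eq_one_of_mem (Dmul_nodup j) h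
  · exact Multiset.count_eq_zero_of_notMem h

lemma Dmul_sum (j : ℕ) : (Dmul j).sum = j * (j + 1) := by
  have key : ∀ j : ℕ, (∑ i ∈ Finset.Icc 1 j, 2 * i) = j * (j + 1) := by
    intro j
    induction j with
    | zero => simp
    | succ j ih =>
      rw [Finset.sum_Icc_succ_top (by omega), ih]
      ring
  rw [show (Dmul j).sum = ∑ i ∈ Finset.Icc 1 j, 2 * i from rfl, key]

lemma Dmul_le {N j : ℕ} {l : N.Partition} (hc : containsUpTo j l) : Dmul j ≤ l.parts := by
  rw [Multiset.le_iff_count]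
  intro k
  rw [Dmul_count]
  split_ifs with h
  · obtain ⟨i, h1, h2, rfl⟩ := mem_Dmul.mp h
    have : 2 * i ∈ l.parts := hc i (Finset.mem_Icc.mpr ⟨h1, h2⟩)
    rwa [← Multiset.one_le_count_iff_mem] at this
  · omega

lemma sigma_eq (N : ℕ) :
    sigmaEdMeex N =
      ∑ j ∈ range (N + 1), 2 * #{l : N.Partition | EvenDistinct l ∧ containsUpTo j l} := by
  rw [sigmaEdMeex, Finset.sum_congr rfl (fun l _ => pmeex_eq N l), Finset.sum_comm]
  apply Finset.sum_congr rfl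
  intro j _
  rw [← Finset.sum_filter, Finset.filter_filter, Finset.sum_const, smul_eq_mul]
  rw [mul_comm]

def subPartition {N : ℕ} (j : ℕ) (l : N.Partition) (hc : containsUpTo j l) :
    (N - j * (j + 1)).Partition where
  parts := l.parts - Dmul j
  parts_pos := fun hi => l.parts_pos (Multiset.mem_of_le (Multiset.sub_le_self _ _) hi)
  parts_sum := by
    have h1 : l.parts - Dmul j + Dmul j = l.parts := tsub_add_cancel_of_le (Dmul_le hc)
    have h2 := congrArg Multiset.sum h1
    rw [Multiset.sum_add, l.parts_sum, Dmul_sum] at h2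
    omega

def addPartition {N : ℕ} (j : ℕ) (h : j * (j + 1) ≤ N) (m : (N - j * (j + 1)).Partition) :
    N.Partition where
  parts := m.parts + Dmul j
  parts_pos := fun hi => by
    rcases Multiset.mem_add.mp hi with h' | h'
    · exact m.parts_pos h'
    · obtain ⟨i', h1, _, rfl⟩ := mem_Dmul.mp h'
      omega
  parts_sum := by rw [Multiset.sum_add, m.parts_sum, Dmul_sum]; omega

lemma card_bij_ed (N j : ℕ) (h : j * (j + 1) ≤ N) :
    #{l : N.Partition | EvenDistinct l ∧ containsUpTo j l} =
      #{m : (N - j * (j + 1)).Partition | EvenDistinct m ∧ avoidsUpTo j m} := by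
  refine Finset.card_bij'
    (fun l hl => subPartition j l (by simp only [Finset.mem_filter] at hl; exact hl.2.2))
    (fun m _ => addPartition j h m) ?_ ?_ ?_ ?_
  · intro l hl
    simp only [Finset.mem_filter, Finset.mem_univ, true_and] at hl ⊢
    obtain ⟨hED, hc⟩ := hl
    constructor
    · intro i hi
      calc (l.parts - Dmul j).count i ≤ l.parts.count i :=
            Multiset.count_le_of_le i (Multiset.sub_le_self _ _)
        _ ≤ 1 := hED i hi
    · intro i hii
      show 2 * i ∉ l.parts - Dmul j
      rw [← Multiset.count_eq_zero, Multiset.count_sub]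
      have hc1 : l.parts.count (2 * i) ≤ 1 := hED _ ⟨i, by ring⟩
      have hd1 : (Dmul j).count (2 * i) = 1 := by
        rw [Dmul_count, if_pos (mem_Dmul.mpr ⟨i, (Finset.mem_Icc.mp hii).1,
          (Finset.mem_Icc.mp hii).2, rfl⟩)]
      omega
  · intro m hm
    simp only [Finset.mem_filter, Finset.mem_univ, true_and] at hm ⊢
    obtain ⟨hED, hav⟩ := hm
    constructor
    · intro i hi
      show (m.parts + Dmul j).count i ≤ 1
      rw [Multiset.count_add]
      by_cases hmem : i ∈ Dmul j
      · obtain ⟨i', h1, h2, rfl⟩ := mem_Dmul.mp hmem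
        have hz : m.parts.count (2 * i') = 0 :=
          Multiset.count_eq_zero_of_notMem (hav i' (Finset.mem_Icc.mpr ⟨h1, h2⟩))
        have ho : (Dmul j).count (2 * i') = 1 := by
          rw [Dmul_count, if_pos hmem]
        omega
      · have hz : (Dmul j).count i = 0 := Multiset.count_eq_zero_of_notMem hmem
        have := hED i hi
        omega
    · intro i hii
      show 2 * i ∈ m.parts + Dmul j
      exact Multiset.mem_add.mpr (Or.inr (mem_Dmul.mpr ⟨i, (Finset.mem_Icc.mp hii).1,
        (Finset.mem_Icc.mp hii).2, rfl⟩))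
  · intro l hl
    apply Nat.Partition.ext
    show l.parts - Dmul j + Dmul j = l.parts
    apply tsub_add_cancel_of_le
    apply Dmul_le
    simp only [Finset.mem_filter] at hl
    exact hl.2.2
  · intro m hm
    apply Nat.Partition.ext
    show m.parts + Dmul j - Dmul j = m.parts
    simp

lemma prod_inv (s : Finset ℕ) (f : ℕ → PowerSeries ℚ) :
    (∏ i ∈ s, f i)⁻¹ = ∏ i ∈ s, (f i)⁻¹ := by
  induction s using Finset.induction with
  | empty => simp
  | @insert a s ha ih =>
    rw [Finset.prod_insert ha, Finset.prod_insert ha, PowerSeries.mul_inv_rev, ← ih, mul_comm]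

def oddProdFin (M : ℕ) : PowerSeries ℚ :=
  ∏ i ∈ (Finset.Icc 1 M).filter (fun i => ¬ Even i), (1 - PowerSeries.X ^ i)

def evenProdFin (M j : ℕ) : PowerSeries ℚ :=
  ∏ i ∈ (Finset.Icc 1 M).filter (fun i => Even i ∧ 2 * j < i), (1 + PowerSeries.X ^ i)

lemma indicator_zero : indicatorSeries ℚ {0} = 1 := by
  ext n
  rw [coeff_indicator, PowerSeries.coeff_one]
  simp [eq_comm]

lemma count_avoid_eq_coeff (M j : ℕ) :
    (#{m : M.Partition | EvenDistinct m ∧ avoidsUpTo j m} : ℚ) =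
      PowerSeries.coeff M ((oddProdFin M)⁻¹ * evenProdFin M j) := by
  classical
  set c : ℕ → Set ℕ := fun i => if ¬ Even i then Set.univ else if i ≤ 2 * j then {0} else {0, 1}
    with hc_def
  have hc : ∀ i, i ∉ Finset.Icc 1 M → 0 ∈ c i := by
    intro i _
    by_cases h1 : ¬ Even i <;> by_cases h2 : i ≤ 2 * j <;> simp [hc_def, h1, h2]
  have hs : ∀ i ∈ Finset.Icc 1 M, 0 < i := fun i hi => by
    have := (Finset.mem_Icc.mp hi).1; omega
  have key := partialGF_prop ℚ M (Finset.Icc 1 M) hs c hc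
  refine Eq.trans ?_ (Eq.trans key ?_)
  · norm_cast
    congr 1
    ext p
    simp only [Finset.mem_filter, Finset.mem_univ, true_and]
    constructor
    · rintro ⟨hED, hav⟩
      refine ⟨fun i => ?_, fun i hi => Finset.mem_Icc.mpr ⟨p.parts_pos hi, part_le p hi⟩⟩
      rw [hc_def]
      by_cases h1 : Even i
      · simp only [h1, not_true_eq_false, if_false]
        by_cases h2 : i ≤ 2 * j
        · simp only [h2, if_true, Set.mem_singleton_iff]
          rcases Nat.eq_zero_or_pos i with rfl | hpos
          · rw [Multiset.count_eq_zero]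
            intro hmem
            exact absurd (p.parts_pos hmem) (by omega)
          · obtain ⟨i', rfl⟩ := h1
            rw [Multiset.count_eq_zero]
            have := hav i' (Finset.mem_Icc.mpr ⟨by omega, by omega⟩)
            rwa [two_mul] at this
        · have := hED i h1
          simp only [h2, if_false]
          interval_cases h : p.parts.count i <;> simp
      · simp [h1]
    · rintro ⟨h1, _⟩
      constructor
      · intro i hi
        have := h1 i
        rw [hc_def] at this
        simp only [hi, not_true_eq_false, if_false] at this
        split_ifs at this with h2
        · simp only [Set.mem_singleton_iff] at this; omega
        · rcases this with h | h <;> simp_all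
      · intro i hii
        have := h1 (2 * i)
        rw [hc_def] at this
        have h2i : Even (2 * i) := ⟨i, by ring⟩
        have hle : 2 * i ≤ 2 * j := by have := (Finset.mem_Icc.mp hii).2; omega
        simp only [h2i, not_true_eq_false, if_false, hle, if_true] at this
        rw [← Multiset.count_eq_zero]
        simpa using this
  congr 1
  -- now the products

  rw [← Finset.prod_filter_mul_prod_filter_not (Finset.Icc 1 M) (fun i => Even i)]
  rw [← Finset.prod_filter_mul_prod_filter_not ((Finset.Icc 1 M).filter (fun i => Even i))
    (fun i => i ≤ 2 * j)]
  have heq1 : ∀ i ∈ ((Finset.Icc 1 M).filter (fun i => Even i)).filter (fun i => i ≤ 2 * j),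
      indicatorSeries ℚ ((· * i) '' c i) = 1 := by
    intro i hi
    simp only [Finset.mem_filter] at hi
    obtain ⟨⟨_, hev⟩, hle⟩ := hi
    rw [hc_def]
    simp only [hev, not_true_eq_false, if_false, hle, if_true]
    rw [show ((· * i) '' ({0} : Set ℕ)) = {0} by simp]
    exact indicator_zero
  have heq2 : ∀ i ∈ ((Finset.Icc 1 M).filter (fun i => Even i)).filter (fun i => ¬ i ≤ 2 * j),
      indicatorSeries ℚ ((· * i) '' c i) = 1 + PowerSeries.X ^ i := by
    intro i hi
    simp only [Finset.mem_filter] at hi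
    obtain ⟨⟨hmem, hev⟩, hle⟩ := hi
    rw [hc_def]
    simp only [hev, not_true_eq_false, if_false, hle, if_false]
    have h1 : 1 ≤ i := (Finset.mem_Icc.mp hmem).1
    have := two_series (α := ℚ) (i - 1)
    rw [show (i - 1).succ = i by omega] at this
    rw [this]
    rw [show ((fun x => x * i) '' ({0, 1} : Set ℕ)) = {0, i} by rw [Set.image_pair]; simp]
  have heq3 : ∀ i ∈ (Finset.Icc 1 M).filter (fun i => ¬ Even i),
      indicatorSeries ℚ ((· * i) '' c i) = (1 - PowerSeries.X ^ i)⁻¹ := by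
    intro i hi
    simp only [Finset.mem_filter] at hi
    obtain ⟨hmem, hev⟩ := hi
    simp only [hc_def, hev, not_false_eq_true, if_true]
    have h1 : 1 ≤ i := (Finset.mem_Icc.mp hmem).1
    have := num_series' (α := ℚ) (i - 1)
    rw [show i - 1 + 1 = i by omega] at this
    have himg : ((· * i) '' (Set.univ : Set ℕ)) = {k | i ∣ k} := by
      ext k
      simp only [Set.mem_image, Set.mem_univ, true_and, Set.mem_setOf_eq]
      constructor
      · rintro ⟨p, rfl⟩; exact Dvd.intro_left p rfl
      · rintro ⟨p, rfl⟩; exact ⟨p, mul_comm p i⟩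
    rw [himg, this]
  rw [Finset.prod_congr rfl heq1, Finset.prod_congr rfl heq2, Finset.prod_congr rfl heq3]
  rw [Finset.prod_const_one, one_mul]
  rw [oddProdFin, prod_inv, evenProdFin]
  rw [mul_comm]
  congr 1
  apply Finset.prod_congr
  · ext i
    simp only [Finset.mem_filter]
    constructor
    · rintro ⟨⟨h1, h2⟩, h3⟩; exact ⟨h1, h2, by omega⟩
    · rintro ⟨h1, h2, h3⟩; exact ⟨⟨h1, h2⟩, by omega⟩
  · intro _ _; rfl

lemma EqMod_factor' (p M : ℕ) (h : M ≤ p) :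
    EqMod (1 + PowerSeries.X ^ p) 1 M := by
  obtain ⟨q, rfl⟩ : ∃ q, p = M + q := ⟨p - M, by omega⟩
  rw [EqMod, show (1 + PowerSeries.X ^ (M + q)) - 1
      = PowerSeries.X ^ M * ((PowerSeries.X : PowerSeries ℚ) ^ q) by rw [pow_add]; ring]
  exact Dvd.intro _ rfl

lemma even_reindex (M j : ℕ) :
    EqMod (pochFin (-1) (2 + 2 * j) 2 (M + 1)) (evenProdFin M j) (M + 1) := by
  have hfac : ∀ k : ℕ, (1 - PowerSeries.C (-1 : ℚ) * PowerSeries.X ^ (2 + 2 * j + 2 * k))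
      = 1 + PowerSeries.X ^ (2 + 2 * j + 2 * k) := by
    intro k; rw [map_neg, map_one]; ring
  rw [pochFin, Finset.prod_congr rfl (fun k _ => hfac k),
    ← Finset.prod_filter_mul_prod_filter_not (range (M + 1)) (fun k => 2 + 2 * j + 2 * k ≤ M)]
  have h1 : EqMod (∏ k ∈ (range (M + 1)).filter (fun k => ¬ (2 + 2 * j + 2 * k ≤ M)),
      (1 + PowerSeries.X ^ (2 + 2 * j + 2 * k))) 1 (M + 1) := by
    apply EqMod.prod_one
    intro k hk
    simp only [Finset.mem_filter, Finset.mem_range] at hk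
    exact EqMod_factor' _ _ (by omega)
  have h2 : (∏ k ∈ (range (M + 1)).filter (fun k => 2 + 2 * j + 2 * k ≤ M),
      (1 + PowerSeries.X ^ (2 + 2 * j + 2 * k))) = evenProdFin M j := by
    rw [evenProdFin]
    apply Finset.prod_nbij' (fun k => 2 + 2 * j + 2 * k) (fun i => (i - (2 + 2 * j)) / 2)
    · intro k hk
      simp only [Finset.mem_filter, Finset.mem_range] at hk
      simp only [Finset.mem_filter, Finset.mem_Icc]
      exact ⟨⟨by omega, by omega⟩, ⟨1 + j + k, by ring⟩, by omega⟩
    · intro i hi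
      simp only [Finset.mem_filter, Finset.mem_Icc] at hi
      obtain ⟨⟨h1', h2'⟩, hev, h3'⟩ := hi
      rw [Nat.even_iff] at hev
      simp only [Finset.mem_filter, Finset.mem_range]
      omega
    · intro k hk; omega
    · intro i hi
      simp only [Finset.mem_filter, Finset.mem_Icc] at hi
      obtain ⟨⟨h1', h2'⟩, hev, h3'⟩ := hi
      rw [Nat.even_iff] at hev
      omega
    · intro k hk; rfl
  rw [h2] at *
  have := (EqMod.refl (evenProdFin M j) (M + 1)).mul h1
  simpa using this

lemma odd_reindex (M : ℕ) :
    EqMod (pochFin 1 1 2 (M + 1)) (oddProdFin M) (M + 1) := by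
  have hfac : ∀ k : ℕ, (1 - PowerSeries.C (1 : ℚ) * PowerSeries.X ^ (1 + 2 * k))
      = 1 - PowerSeries.X ^ (1 + 2 * k) := by
    intro k; rw [map_one, one_mul]
  rw [pochFin, Finset.prod_congr rfl (fun k _ => hfac k),
    ← Finset.prod_filter_mul_prod_filter_not (range (M + 1)) (fun k => 1 + 2 * k ≤ M)]
  have h1 : EqMod (∏ k ∈ (range (M + 1)).filter (fun k => ¬ (1 + 2 * k ≤ M)),
      (1 - PowerSeries.X ^ (1 + 2 * k))) 1 (M + 1) := by
    apply EqMod.prod_one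
    intro k hk
    simp only [Finset.mem_filter, Finset.mem_range] at hk
    have := EqMod_factor 1 (1 + 2 * k) (M + 1) (by omega)
    rwa [map_one, one_mul] at this
  have h2 : (∏ k ∈ (range (M + 1)).filter (fun k => 1 + 2 * k ≤ M),
      (1 - PowerSeries.X ^ (1 + 2 * k))) = oddProdFin M := by
    rw [oddProdFin]
    apply Finset.prod_nbij' (fun k => 1 + 2 * k) (fun i => (i - 1) / 2)
    · intro k hk
      simp only [Finset.mem_filter, Finset.mem_range] at hk
      simp only [Finset.mem_filter, Finset.mem_Icc, Nat.even_iff]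
      refine ⟨⟨by omega, by omega⟩, by omega⟩
    · intro i hi
      simp only [Finset.mem_filter, Finset.mem_Icc, Nat.even_iff] at hi
      simp only [Finset.mem_filter, Finset.mem_range]
      omega
    · intro k hk; omega
    · intro i hi
      simp only [Finset.mem_filter, Finset.mem_Icc, Nat.even_iff] at hi
      omega
    · intro k hk; rfl
  rw [h2] at *
  have := (EqMod.refl (oddProdFin M) (M + 1)).mul h1
  simpa using this

lemma constCoeff_oddProdFin (M : ℕ) : PowerSeries.constantCoeff (oddProdFin M) = 1 := by
  rw [oddProdFin, map_prod]
  apply Finset.prod_eq_one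
  intro i hi
  simp only [Finset.mem_filter, Finset.mem_Icc] at hi
  simp [zero_pow (by omega : i ≠ 0)]

lemma mul_mk_sum (c : PowerSeries ℚ) (f : ℕ → PowerSeries ℚ)
    (h : ∀ n N, PowerSeries.coeff N (f n) ≠ 0 → n ≤ N) :
    c * (PowerSeries.mk fun N => ∑ n ∈ range (N + 1), PowerSeries.coeff N (f n)) =
      PowerSeries.mk fun N => ∑ n ∈ range (N + 1), PowerSeries.coeff N (c * f n) := by
  ext N
  rw [PowerSeries.coeff_mk, PowerSeries.coeff_mul]
  have step1 : ∀ p ∈ Finset.HasAntidiagonal.antidiagonal N,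
      PowerSeries.coeff p.1 c * PowerSeries.coeff p.2
        (PowerSeries.mk fun N' => ∑ n ∈ range (N' + 1), PowerSeries.coeff N' (f n))
      = ∑ n ∈ range (N + 1), PowerSeries.coeff p.1 c * PowerSeries.coeff p.2 (f n) := by
    intro p hp
    rw [PowerSeries.coeff_mk, Finset.mul_sum]
    apply Finset.sum_subset
    · apply Finset.range_subset_range.mpr
      have := Finset.HasAntidiagonal.mem_antidiagonal.mp hp
      omega
    · intro n _ hn
      simp only [Finset.mem_range, not_lt] at hn
      have : PowerSeries.coeff p.2 (f n) = 0 := by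
        by_contra hc
        exact absurd (h n p.2 hc) (by omega)
      rw [this, mul_zero]
  rw [Finset.sum_congr rfl step1, Finset.sum_comm]
  apply Finset.sum_congr rfl
  intro n _
  rw [PowerSeries.coeff_mul]

lemma lhs_eq :
    (∑' n : ℕ, PowerSeries.C (sigmaEdMeex n : ℚ) * PowerSeries.X ^ n) =
      PowerSeries.mk fun N => (sigmaEdMeex N : ℚ) := by
  have h : ∀ n N, PowerSeries.coeff N
      (PowerSeries.C (sigmaEdMeex n : ℚ) * PowerSeries.X ^ n) ≠ 0 → n ≤ N := by
    intro n N hne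
    rw [PowerSeries.coeff_C_mul_X_pow] at hne
    by_contra hc
    simp [show ¬ (N = n) by omega] at hne
  rw [(hasSum_aux _ h).tsum_eq]
  ext N
  rw [PowerSeries.coeff_mk, PowerSeries.coeff_mk]
  rw [Finset.sum_congr rfl (fun n _ => PowerSeries.coeff_C_mul_X_pow (sigmaEdMeex n : ℚ) n N)]
  rw [Finset.sum_congr rfl (fun n _ => by rw [show ((if N = n then ((sigmaEdMeex n : ℚ)) else 0)) = if n = N then ((sigmaEdMeex n : ℚ)) else 0 by simp [eq_comm]])]
  rw [Finset.sum_ite_eq' (range (N + 1)) N]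
  simp

lemma rhs_sum_eq :
    (∑' n : ℕ, PowerSeries.X ^ (n * (n + 1)) * (pochFin (-1) 2 2 n)⁻¹ : PowerSeries ℚ) =
      PowerSeries.mk fun N => ∑ n ∈ range (N + 1),
        PowerSeries.coeff N (PowerSeries.X ^ (n * (n + 1)) * (pochFin (-1) 2 2 n)⁻¹) := by
  apply HasSum.tsum_eq
  apply hasSum_aux
  intro n N hne
  rw [PowerSeries.coeff_X_pow_mul'] at hne
  have hn : n ≤ n * (n + 1) := by nlinarith
  by_contra hc
  simp [show ¬ (n * (n + 1) ≤ N) by omega] at hne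

lemma tail_eq (j : ℕ) :
    pochInf (-1) 2 2 * (pochFin (-1) 2 2 j)⁻¹ = pochInf (-1) (2 + 2 * j) 2 := by
  rw [pochInf_split (-1) 2 2 j (by omega) (by omega), mul_comm (pochFin (-1) 2 2 j) _,
    mul_assoc, PowerSeries.mul_inv_cancel _ (by rw [constCoeff_pochFin _ _ _ (by omega)]; norm_num),
    mul_one]

theorem stmt_14 :
    (∑' n : ℕ, PowerSeries.C (sigmaEdMeex n : ℚ) * PowerSeries.X ^ n) =
      2 * (pochInf (-1) 2 2 * (pochInf 1 1 2)⁻¹) *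
        ∑' n : ℕ, PowerSeries.X ^ (n * (n + 1)) * (pochFin (-1) 2 2 n)⁻¹ := by
  have hf : ∀ n N, PowerSeries.coeff N
      ((PowerSeries.X : PowerSeries ℚ) ^ (n * (n + 1)) * (pochFin (-1) 2 2 n)⁻¹) ≠ 0 → n ≤ N := by
    intro n N hne
    rw [PowerSeries.coeff_X_pow_mul'] at hne
    have hn : n ≤ n * (n + 1) := by nlinarith
    by_contra hc
    simp [show ¬ (n * (n + 1) ≤ N) by omega] at hne
  rw [lhs_eq, rhs_sum_eq, mul_mk_sum _ _ hf]
  ext N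
  rw [PowerSeries.coeff_mk, PowerSeries.coeff_mk, sigma_eq N]
  push_cast
  apply Finset.sum_congr rfl
  intro j hj
  have hre : 2 * (pochInf (-1) 2 2 * (pochInf 1 1 2)⁻¹) *
        ((PowerSeries.X : PowerSeries ℚ) ^ (j * (j + 1)) * (pochFin (-1) 2 2 j)⁻¹)
      = (PowerSeries.C (2 : ℚ) * (pochInf (-1) (2 + 2 * j) 2 * (pochInf 1 1 2)⁻¹)) *
        PowerSeries.X ^ (j * (j + 1)) := by
    rw [show (PowerSeries.C (2 : ℚ) : PowerSeries ℚ) = 2 by simp [map_ofNat]]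
    rw [show 2 * (pochInf (-1) 2 2 * (pochInf 1 1 2)⁻¹) *
        ((PowerSeries.X : PowerSeries ℚ) ^ (j * (j + 1)) * (pochFin (-1) 2 2 j)⁻¹)
      = 2 * ((pochInf (-1) 2 2 * (pochFin (-1) 2 2 j)⁻¹) * (pochInf 1 1 2)⁻¹) *
        PowerSeries.X ^ (j * (j + 1)) by ring, tail_eq]
  rw [hre, PowerSeries.coeff_mul_X_pow']
  by_cases hcase : j * (j + 1) ≤ N
  · rw [if_pos hcase]
    rw [card_bij_ed N j hcase, count_avoid_eq_coeff (N - j * (j + 1)) j]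
    set M := N - j * (j + 1) with hM
    rw [PowerSeries.coeff_C_mul]
    congr 1
    have E_even : EqMod (pochInf (-1) (2 + 2 * j) 2) (evenProdFin M j) (M + 1) :=
      (EqMod_pochInf (by omega) (by omega) le_rfl).trans (even_reindex M j)
    have E_B : EqMod (pochInf 1 1 2) (oddProdFin M) (M + 1) :=
      (EqMod_pochInf (by omega) (by omega) le_rfl).trans (odd_reindex M)
    have E_odd : EqMod ((pochInf 1 1 2)⁻¹) ((oddProdFin M)⁻¹) (M + 1) :=
      E_B.inv (by rw [constCoeff_pochInf 1 (b := 1) 2 (by omega) (by omega)]; norm_num)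
        (by rw [constCoeff_oddProdFin]; norm_num)
    have E := E_even.mul E_odd
    rw [E.coeff_eq (by omega), mul_comm]
  · rw [if_neg hcase]
    have hzero : #{l : N.Partition | EvenDistinct l ∧ containsUpTo j l} = 0 := by
      rw [Finset.card_eq_zero]
      ext l
      simp only [Finset.mem_filter, Finset.mem_univ, true_and, Finset.notMem_empty, iff_false]
      rintro ⟨hED, hc⟩
      have h1 : l.parts - Dmul j + Dmul j = l.parts := tsub_add_cancel_of_le (Dmul_le hc)
      have h2 := congrArg Multiset.sum h1
      rw [Multiset.sum_add, l.parts_sum, Dmul_sum] at h2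
      omega
    rw [hzero]
    norm_num


end
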